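/- In R = MvPowerSeries (Fin m) ℚ, the power series Td′ · (Σ_{r=1}^m (−1)^r · r · ch_r) agrees in total degree m with (1/12) · e_1 · e_{m−1} + (m²/4) · e_m. -/

import Mathlib

open Finset

noncomputable section

/-- The element of `MvPowerSeries (Fin m) ℚ` obtained by substituting the variable `X j`
into a one-variable formal power series `f`. -/
def substAt {m : ℕ} (j : Fin m) (f : PowerSeries ℚ) : MvPowerSeries (Fin m) ℚ :=
  fun n => if n.support ⊆ {j} then PowerSeries.coeff (R := ℚ) (n j) f else 0

/-- The one-variable power series `exp (−X) = Σ_{n ≥ 0} (−X)^n / n!`. -/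
def expNeg : PowerSeries ℚ := PowerSeries.mk fun n => (-1) ^ n / n.factorial

/-- `ch m r = Σ_{S ⊆ Fin m, |S| = r} ∏_{j ∈ S} exp (−X j)`, the `r`-th Chern character
term of the exterior powers, written in Chern roots. -/
def ch (m : ℕ) (r : ℕ) : MvPowerSeries (Fin m) ℚ :=
  ∑ S ∈ Finset.powersetCard r (Finset.univ : Finset (Fin m)),
    ∏ j ∈ S, substAt j expNeg

/-- `esymm m k = Σ_{S ⊆ Fin m, |S| = k} ∏_{j ∈ S} X j`, the `k`-th elementary symmetric
polynomial of the variables, as a multivariate power series. -/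
def esymm (m : ℕ) (k : ℕ) : MvPowerSeries (Fin m) ℚ :=
  ∑ S ∈ Finset.powersetCard k (Finset.univ : Finset (Fin m)),
    ∏ j ∈ S, MvPowerSeries.X j

/-- The Todd class `Td = ∏_{j=1}^m φ(X_j)` written in Chern roots, where `φ` is the
Todd series `X/(1 − e^{−X})`. -/
def Td (m : ℕ) (φ : PowerSeries ℚ) : MvPowerSeries (Fin m) ℚ :=
  ∏ j : Fin m, substAt j φ

/-- `Td′ = Σ_{j=1}^m φ′(X_j) · ∏_{k ≠ j} φ(X_k)`, the class
`Td′(A) = ∂/∂t Td(A + t·Id)|_{t=0}` written in Chern roots. -/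
def Td' (m : ℕ) (φ : PowerSeries ℚ) : MvPowerSeries (Fin m) ℚ :=
  ∑ j : Fin m, substAt j (PowerSeries.derivative (R := ℚ) φ) *
    ∏ k ∈ Finset.univ.erase j, substAt k φ

/-- Two multivariate power series agree in total degree `≤ p`: their coefficients at every
multi-exponent of total degree `≤ p` coincide. -/
def AgreeUpTo (m p : ℕ) (F G : MvPowerSeries (Fin m) ℚ) : Prop :=
  ∀ n : Fin m →₀ ℕ, (∑ j, n j) ≤ p → MvPowerSeries.coeff (R := ℚ) n F = MvPowerSeries.coeff (R := ℚ) n G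

/-- Two multivariate power series agree in total degree `p`: their coefficients at every
multi-exponent of total degree `p` coincide. -/
def AgreeAt (m p : ℕ) (F G : MvPowerSeries (Fin m) ℚ) : Prop :=
  ∀ n : Fin m →₀ ℕ, (∑ j, n j) = p → MvPowerSeries.coeff (R := ℚ) n F = MvPowerSeries.coeff (R := ℚ) n G

/-!
Write `E_j = exp (-X_j)`. The weighted sum `Σ_r (-1)^r r ch_r` is `-Σ_j E_j ∏_{k ≠ j} (1 - E_k)`
(the derivative at `t = 1` of `∏_k (1 - t E_k)`), and `φ(X_k) (1 - E_k) = X_k`. So the `(i, j)`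
term of `Td′ · Σ_r (-1)^r r ch_r` is, up to sign, a product `∏_k f_k(X_k)` of one-variable series
with `f_k = X` for `k ∉ {i, j}`, and its coefficients in degree `m` only see the coefficients
`1, 1/2, 1/12` of `φ`. In degree `m` its negative matches `1/12` times the `(i, j)` term
`X_i ∏_{k ≠ j} X_k` of `e_1 e_{m-1}` plus `e_m / 4`: both are `e_m / 3` when `i = j`, and both are
`X_i² ∏_{k ≠ i, j} X_k / 12 + e_m / 4` when `i ≠ j`. Summing over the `m²` pairs gives the claim.
-/

section Todd

open PowerSeries

theorem coeff_expNeg (n : ℕ) : coeff n expNeg = (-1) ^ n / n.factorial := by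
  simp [expNeg]

variable {φ : PowerSeries ℚ} (hφ : φ * (1 - expNeg) = X)
include hφ

theorem coeff_zero_todd : coeff 0 φ = 1 := by
  simpa [coeff_mul, Nat.sum_antidiagonal_succ, coeff_expNeg] using congrArg (coeff 1) hφ

theorem coeff_one_todd : coeff 1 φ = 1 / 2 := by
  have h := congrArg (coeff 2) hφ
  simp [coeff_mul, Nat.sum_antidiagonal_succ, coeff_expNeg, coeff_X, coeff_zero_todd hφ] at h
  linarith

theorem coeff_two_todd : coeff 2 φ = 1 / 12 := by
  have h := congrArg (coeff 3) hφ
  simp [coeff_mul, Nat.sum_antidiagonal_succ, coeff_expNeg, coeff_X, Nat.factorial,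
    coeff_zero_todd hφ, coeff_one_todd hφ] at h
  linarith

theorem coeff_one_derivative_todd_mul_expNeg : coeff 1 (derivative ℚ φ * expNeg) = -1 / 3 := by
  simp [coeff_mul, Nat.sum_antidiagonal_succ, coeff_expNeg, coeff_derivative, coeff_one_todd hφ,
    coeff_two_todd hφ]
  norm_num

theorem coeff_derivative_todd_mul_one_sub_expNeg :
    coeff 0 (derivative ℚ φ * (1 - expNeg)) = 0 ∧
      coeff 1 (derivative ℚ φ * (1 - expNeg)) = 1 / 2 ∧
      coeff 2 (derivative ℚ φ * (1 - expNeg)) = -1 / 12 := by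
  simp [coeff_mul, Nat.sum_antidiagonal_succ, coeff_expNeg, coeff_derivative, Nat.factorial,
    coeff_one_todd hφ, coeff_two_todd hφ]
  norm_num

theorem coeff_todd_mul_expNeg :
    coeff 0 (φ * expNeg) = 1 ∧ coeff 1 (φ * expNeg) = -1 / 2 ∧ coeff 2 (φ * expNeg) = 1 / 12 := by
  simp [coeff_mul, Nat.sum_antidiagonal_succ, coeff_expNeg, Nat.factorial, coeff_zero_todd hφ,
    coeff_one_todd hφ, coeff_two_todd hφ]
  norm_num

end Todd

theorem Finset.prod_ite_eq_mul_prod_erase {ι M : Type*} [DecidableEq ι] [CommMonoid M]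
    {s : Finset ι} {j : ι} (hj : j ∈ s) (f g : ι → M) :
    ∏ k ∈ s, (if k = j then f k else g k) = f j * ∏ k ∈ s.erase j, g k := by
  rw [← mul_prod_erase s _ hj, if_pos rfl]
  exact congrArg _ (prod_congr rfl fun k hk ↦ if_neg (ne_of_mem_erase hk))

theorem Finset.powersetCard_card_sub_one_eq_image_erase {α : Type*} [DecidableEq α]
    {s : Finset α} (hs : s.Nonempty) : powersetCard (#s - 1) s = s.image s.erase := by
  ext S
  simp only [mem_powersetCard, mem_image]
  constructor
  · rintro ⟨hSs, hS⟩
    obtain ⟨j, hjs, hjS⟩ := exists_of_ssubset (ssubset_of_subset_of_ne hSs (by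
      rintro rfl; have := hs.card_pos; omega))
    refine ⟨j, hjs, (eq_of_subset_of_card_le (subset_erase.2 ⟨hSs, hjS⟩) ?_).symm⟩
    rw [card_erase_of_mem hjs, hS]
  · rintro ⟨j, hj, rfl⟩
    exact ⟨erase_subset j s, card_erase_of_mem hj⟩

theorem Finset.sum_eq_card_of_forall_notMem_eq_one {ι : Type*} [Fintype ι] (s : Finset ι)
    {n : ι → ℕ} (hn : ∑ k, n k = Fintype.card ι) (h1 : ∀ k ∉ s, n k = 1) :
    ∑ k ∈ s, n k = #s := by
  classical
  rw [← sum_add_sum_compl s, sum_congr rfl fun k hk ↦ h1 k (mem_compl.1 hk), sum_const,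
    smul_eq_mul, mul_one, card_compl] at hn
  have := card_le_univ s
  omega

theorem Finset.sum_powerset_filter_mem_neg_one_pow_card_mul_prod {ι R : Type*} [DecidableEq ι]
    [CommRing R] {s : Finset ι} {j : ι} (hj : j ∈ s) (E : ι → R) :
    ∑ S ∈ s.powerset with j ∈ S, (-1) ^ #S * ∏ k ∈ S, E k =
      -(E j * ∏ k ∈ s.erase j, (1 - E k)) := by
  have hjs : j ∉ s.erase j := notMem_erase j s
  have hexp : ∏ k ∈ s.erase j, (1 - E k) =
      ∑ T ∈ (s.erase j).powerset, (-1) ^ #T * ∏ k ∈ T, E k := by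
    simp_rw [sub_eq_add_neg, add_comm (1 : R), prod_add_one, neg_eq_neg_one_mul (E _),
      prod_mul_distrib, prod_const]
  rw [← insert_erase hj, sum_filter, sum_powerset_insert hjs, erase_insert hjs, hexp, mul_sum,
    ← sum_neg_distrib]
  have hT : ∀ T ∈ (s.erase j).powerset, j ∉ T := fun T hT hjT ↦ hjs (mem_powerset.1 hT hjT)
  rw [sum_congr rfl fun T hTs ↦ if_neg (hT T hTs), sum_const_zero, zero_add]
  refine sum_congr rfl fun T hTs ↦ ?_
  rw [if_pos (mem_insert_self j T), card_insert_of_notMem (hT T hTs), prod_insert (hT T hTs)]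
  ring

theorem Finset.sum_Icc_neg_one_pow_mul_sum_powersetCard {ι R : Type*} [DecidableEq ι]
    [CommRing R] (s : Finset ι) (E : ι → R) :
    ∑ r ∈ Icc 1 #s, (-1 : R) ^ r * r * ∑ S ∈ powersetCard r s, ∏ k ∈ S, E k =
      -∑ j ∈ s, E j * ∏ k ∈ s.erase j, (1 - E k) := by
  have hsum : ∑ r ∈ Icc 1 #s, (-1 : R) ^ r * r * ∑ S ∈ powersetCard r s, ∏ k ∈ S, E k =
      ∑ S ∈ s.powerset, (-1) ^ #S * #S * ∏ k ∈ S, E k := by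
    have hsub : Icc 1 #s ⊆ range (#s + 1) := fun r hr ↦ by
      simp only [mem_Icc, mem_range] at hr ⊢; omega
    rw [sum_powerset, sum_subset hsub fun r hr hr' ↦ ?_]
    · refine sum_congr rfl fun r _ ↦ ?_
      rw [mul_sum]
      exact sum_congr rfl fun S hS ↦ by rw [(mem_powersetCard.1 hS).2]
    · obtain rfl : r = 0 := by simp only [mem_Icc, mem_range] at hr hr'; omega
      simp
  have hcard : ∀ S ∈ s.powerset, (-1 : R) ^ #S * #S * ∏ k ∈ S, E k =
      ∑ j ∈ s, if j ∈ S then (-1) ^ #S * ∏ k ∈ S, E k else 0 := fun S hS ↦ by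
    rw [sum_ite_mem, inter_eq_right.2 (mem_powerset.1 hS), sum_const, nsmul_eq_mul]
    ring
  rw [hsum, sum_congr rfl hcard, sum_comm, ← sum_neg_distrib]
  exact sum_congr rfl fun j hj ↦ by
    rw [← sum_filter, sum_powerset_filter_mem_neg_one_pow_card_mul_prod hj]

theorem PowerSeries.coeff_prod_subst_X {σ R : Type*} [Fintype σ] [CommRing R]
    (f : σ → PowerSeries R) (n : σ →₀ ℕ) :
    MvPowerSeries.coeff n (∏ k, (f k).subst (MvPowerSeries.X k : MvPowerSeries σ R)) =
      ∏ k, coeff (n k) (f k) := by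
  classical
  rw [MvPowerSeries.coeff_prod]
  simp only [coeff_subst_single]
  let l₀ : σ →₀ σ →₀ ℕ := Finsupp.equivFunOnFinite.symm fun k ↦ Finsupp.single k (n k)
  rw [Finset.sum_eq_single_of_mem l₀ (by simp [Finset.mem_finsuppAntidiag, l₀])]
  · simp [l₀]
  · intro l hl hne
    rw [Finset.mem_finsuppAntidiag] at hl
    obtain ⟨k, hk⟩ : ∃ k, l k ≠ Finsupp.single k (l k k) := by
      by_contra! h
      refine hne (Finsupp.ext fun k ↦ ?_)
      have : n k = l k k := by
        rw [← hl.1, Finsupp.finsetSum_apply, Finset.sum_eq_single k]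
        · intro b _ hb; rw [h b, Finsupp.single_eq_of_ne hb.symm]
        · simp
      simp [l₀, this, ← h k]
    exact Finset.prod_eq_zero (Finset.mem_univ k) (if_neg hk)

theorem PowerSeries.prod_coeff_eq_ite_of_eq_X {ι R : Type*} [Fintype ι] [DecidableEq ι]
    [CommSemiring R] (s : Finset ι) {F : ι → PowerSeries R} (hF : ∀ k ∉ s, F k = X)
    (n : ι → ℕ) :
    ∏ k, coeff (n k) (F k) = if ∀ k ∉ s, n k = 1 then ∏ k ∈ s, coeff (n k) (F k) else 0 := by
  have hcompl : ∏ k ∈ sᶜ, coeff (n k) (F k) = ∏ k ∈ sᶜ, if n k = 1 then 1 else 0 :=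
    prod_congr rfl fun k hk ↦ by rw [hF k (mem_compl.1 hk), coeff_X]
  rw [← prod_mul_prod_compl s, hcompl, prod_boole]
  simp only [mem_compl, mul_ite, mul_one, mul_zero]

theorem substAt_eq_subst {m : ℕ} (j : Fin m) (f : PowerSeries ℚ) :
    substAt j f = f.subst (MvPowerSeries.X j) := by
  ext d
  simp only [PowerSeries.coeff_subst_single, ← Finsupp.support_subset_singleton]
  rfl

theorem substAt_mul {m : ℕ} (j : Fin m) (f g : PowerSeries ℚ) :
    substAt j (f * g) = substAt j f * substAt j g := by
  simp only [substAt_eq_subst, PowerSeries.subst_mul (PowerSeries.HasSubst.X j)]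

theorem substAt_sub {m : ℕ} (j : Fin m) (f g : PowerSeries ℚ) :
    substAt j (f - g) = substAt j f - substAt j g := by
  simp only [substAt_eq_subst, PowerSeries.subst_sub (PowerSeries.HasSubst.X j)]

theorem substAt_one {m : ℕ} (j : Fin m) : substAt j 1 = 1 := by
  rw [substAt_eq_subst, ← PowerSeries.coe_substAlgHom (PowerSeries.HasSubst.X j), map_one]

theorem substAt_X {m : ℕ} (j : Fin m) : substAt j PowerSeries.X = MvPowerSeries.X j := by
  rw [substAt_eq_subst, PowerSeries.subst_X (PowerSeries.HasSubst.X j)]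

theorem coeff_prod_substAt {m : ℕ} (f : Fin m → PowerSeries ℚ) (n : Fin m →₀ ℕ) :
    MvPowerSeries.coeff n (∏ k, substAt k (f k)) = ∏ k, PowerSeries.coeff (n k) (f k) := by
  simp only [substAt_eq_subst, PowerSeries.coeff_prod_subst_X]

theorem td'_eq_sum_prod_substAt (m : ℕ) (φ : PowerSeries ℚ) :
    Td' m φ = ∑ i, ∏ k, substAt k (if k = i then PowerSeries.derivative ℚ φ else φ) := by
  refine sum_congr rfl fun i _ ↦ ?_
  simp only [apply_ite (substAt _), prod_ite_eq_mul_prod_erase (mem_univ i)]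

theorem weighted_sum_ch_eq_neg_sum_prod_substAt (m : ℕ) :
    ∑ r ∈ Icc 1 m, (-1 : MvPowerSeries (Fin m) ℚ) ^ r * (r : MvPowerSeries (Fin m) ℚ) * ch m r =
      -∑ j, ∏ k, substAt k (if k = j then expNeg else 1 - expNeg) := by
  have h := sum_Icc_neg_one_pow_mul_sum_powersetCard (univ : Finset (Fin m))
    fun k ↦ substAt k expNeg
  rw [card_univ, Fintype.card_fin] at h
  simp only [ch, h, apply_ite (substAt _), prod_ite_eq_mul_prod_erase (mem_univ _), substAt_sub,
    substAt_one]

theorem td'_mul_weighted_sum_ch_eq (m : ℕ) (φ : PowerSeries ℚ) :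
    Td' m φ * ∑ r ∈ Icc 1 m,
        (-1 : MvPowerSeries (Fin m) ℚ) ^ r * (r : MvPowerSeries (Fin m) ℚ) * ch m r =
      -∑ i, ∑ j, ∏ k, substAt k ((if k = i then PowerSeries.derivative ℚ φ else φ) *
        (if k = j then expNeg else 1 - expNeg)) := by
  simp only [td'_eq_sum_prod_substAt, weighted_sum_ch_eq_neg_sum_prod_substAt, mul_neg,
    sum_mul_sum, substAt_mul, prod_mul_distrib]

theorem esymm_one_mul_esymm_sub_one {m : ℕ} (hm : 0 < m) :
    esymm m 1 * esymm m (m - 1) =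
      ∑ i, ∑ j, ∏ k, substAt k ((if k = i then PowerSeries.X else 1) *
        (if k = j then 1 else PowerSeries.X)) := by
  have hone : esymm m 1 = ∑ i, ∏ k, substAt k (if k = i then PowerSeries.X else 1) := by
    simp [esymm, powersetCard_one, apply_ite (substAt _), substAt_X, substAt_one]
  have hpred : esymm m (m - 1) = ∑ j, ∏ k, substAt k (if k = j then 1 else PowerSeries.X) := by
    have h := powersetCard_card_sub_one_eq_image_erase (univ_nonempty_iff.2 ⟨(⟨0, hm⟩ : Fin m)⟩)
    rw [card_univ, Fintype.card_fin] at h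
    rw [esymm, h, sum_image fun i _ j _ ↦ (erase_inj _ (mem_univ i)).1]
    simp [apply_ite (substAt _), substAt_X, substAt_one, prod_ite_eq_mul_prod_erase (mem_univ _)]
  simp only [hone, hpred, sum_mul_sum, substAt_mul, prod_mul_distrib]

theorem esymm_self (m : ℕ) : esymm m m = ∏ k : Fin m, substAt k PowerSeries.X := by
  have h := powersetCard_self (univ : Finset (Fin m))
  rw [card_univ, Fintype.card_fin] at h
  simp [esymm, h, substAt_X]

theorem neg_prod_coeff_td'_term_eq {m : ℕ} {φ : PowerSeries ℚ}
    (hφ : φ * (1 - expNeg) = PowerSeries.X) {n : Fin m → ℕ} (hn : ∑ k, n k = m) (i j : Fin m) :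
    -∏ k, PowerSeries.coeff (n k) ((if k = i then PowerSeries.derivative ℚ φ else φ) *
        (if k = j then expNeg else 1 - expNeg)) =
      1 / 12 * ∏ k, PowerSeries.coeff (n k) ((if k = i then PowerSeries.X else 1) *
        (if k = j then 1 else PowerSeries.X)) +
      1 / 4 * ∏ k, PowerSeries.coeff (n k) PowerSeries.X := by
  rw [PowerSeries.prod_coeff_eq_ite_of_eq_X {i, j} fun k hk ↦ by simp_all,
    PowerSeries.prod_coeff_eq_ite_of_eq_X {i, j} fun k hk ↦ by simp_all,
    PowerSeries.prod_coeff_eq_ite_of_eq_X {i, j} fun _ _ ↦ rfl]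
  split_ifs with h1
  swap; · simp
  have hsum := sum_eq_card_of_forall_notMem_eq_one {i, j} (by simpa using hn) h1
  rcases eq_or_ne i j with rfl | hij
  · simp only [insert_eq_of_mem (mem_singleton_self i), sum_singleton, card_singleton] at hsum
    simp [hsum, coeff_one_derivative_todd_mul_expNeg hφ]
    norm_num
  · rw [sum_pair hij, card_pair hij] at hsum
    obtain ⟨hg0, hg1, hg2⟩ := coeff_derivative_todd_mul_one_sub_expNeg hφ
    obtain ⟨hh0, hh1, hh2⟩ := coeff_todd_mul_expNeg hφ
    simp only [prod_pair hij, if_neg hij, if_neg hij.symm, one_mul]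
    obtain ⟨a, ha⟩ : ∃ a, n i = a := ⟨_, rfl⟩
    have hb : n j = 2 - a := by omega
    have ha2 : a ≤ 2 := by omega
    rw [ha, hb]
    interval_cases a <;> simp [hg0, hg1, hg2, hh0, hh1, hh2] <;> norm_num

/-- `Td′ · (Σ_{r=1}^m (−1)^r · r · ch_r)` agrees in total degree `m` with
`(1/12) · e_1 · e_{m−1} + (m²/4) · e_m`.  (The term `e_{m−1}` presupposes `1 ≤ m`.) -/
theorem td'_mul_weighted_sum_ch (m : ℕ) (hm : 0 < m) (φ : PowerSeries ℚ)
    (hφ : φ * (1 - expNeg) = PowerSeries.X) :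
    AgreeAt m m
      (Td' m φ * ∑ r ∈ Finset.Icc 1 m,
        (-1 : MvPowerSeries (Fin m) ℚ) ^ r * (r : MvPowerSeries (Fin m) ℚ) * ch m r)
      (MvPowerSeries.C (σ := Fin m) (R := ℚ) (1 / 12 : ℚ) * (esymm m 1 * esymm m (m - 1)) +
        MvPowerSeries.C (σ := Fin m) (R := ℚ) ((m : ℚ) ^ 2 / 4) * esymm m m) := by
  intro n hn
  rw [td'_mul_weighted_sum_ch_eq, esymm_one_mul_esymm_sub_one hm, esymm_self]
  simp only [map_neg, map_add, map_sum, MvPowerSeries.coeff_C_mul, coeff_prod_substAt,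
    ← sum_neg_distrib, neg_prod_coeff_td'_term_eq hφ hn, sum_add_distrib, ← mul_sum, sum_const,
    card_univ, Fintype.card_fin, nsmul_eq_mul]
  ring
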